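/- Let r > 0 be real, q a natural number, Λ_R > 0, c ≥ 0, and let P be a polynomial of degree at most q with nonnegative coefficients. Then there exists a polynomial Q of degree at most q+1 with nonnegative coefficients, depending only on P, q, r, c and Λ_R, such that the following holds: for every f : ℝ → ℝ differentiable on [Λ_R, ∞) satisfying |x · f'(x)| ≤ x^r · P(Real.log(x/Λ_R)) for all x ≥ Λ_R, and |f(Λ_R)| ≤ c, one has |f(Λ)| ≤ Λ^r · Q(Real.log(Λ/Λ_R)) for all Λ ≥ Λ_R. -/

import Mathlib

/-!
Take `Q := c Λ_R^{-r} + ∫ P`, the antiderivative of `P` with constant term `c Λ_R^{-r}`, and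
compare `f` with the barrier `B x = x^r Q(log(x/Λ_R))`. Then `B Λ_R = c ≥ |f Λ_R|` and
`B' x = x^{r-1} (r Q + P)(log(x/Λ_R)) ≥ x^{r-1} P(log(x/Λ_R)) ≥ |f' x|`, because `r ≥ 0` and `Q`,
having nonnegative coefficients, is nonnegative on `[0, ∞)`. The comparison principle for
derivatives gives `|f| ≤ B` on `[Λ_R, ∞)`.
-/

open Polynomial Set

namespace Polynomial

theorem eval_nonneg_of_coeff_nonneg {R : Type*} [CommSemiring R] [PartialOrder R]
    [IsOrderedRing R] {p : R[X]} (hp : ∀ k, 0 ≤ p.coeff k) {y : R} (hy : 0 ≤ y) :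
    0 ≤ p.eval y := by
  rw [eval_eq_sum_range]
  exact Finset.sum_nonneg fun k _ => mul_nonneg (hp k) (pow_nonneg hy k)

section Antiderivative

variable {K : Type*} [Field K]

noncomputable def antiderivative (p : K[X]) : K[X] :=
  ∑ k ∈ Finset.range (p.natDegree + 1), monomial (k + 1) (p.coeff k / (k + 1))

theorem natDegree_antiderivative_le (p : K[X]) :
    p.antiderivative.natDegree ≤ p.natDegree + 1 :=
  natDegree_sum_le_of_forall_le _ _ fun _ hk =>
    (natDegree_monomial_le _).trans (Nat.succ_le_succ (Finset.mem_range_succ_iff.mp hk))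

@[simp]
theorem eval_zero_antiderivative (p : K[X]) : p.antiderivative.eval 0 = 0 := by
  simp [antiderivative, eval_finsetSum]

theorem derivative_antiderivative [CharZero K] (p : K[X]) :
    derivative p.antiderivative = p := by
  conv_rhs => rw [p.as_sum_range' (p.natDegree + 1) (Nat.lt_succ_self _)]
  refine (derivative_sum).trans (Finset.sum_congr rfl fun k _ => ?_)
  rw [derivative_monomial]
  push_cast
  rw [div_mul_cancel₀ _ (Nat.cast_add_one_ne_zero k)]

theorem coeff_antiderivative_nonneg [LinearOrder K] [IsStrictOrderedRing K] {p : K[X]}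
    (hp : ∀ k, 0 ≤ p.coeff k) (n : ℕ) : 0 ≤ p.antiderivative.coeff n := by
  rw [antiderivative, finsetSum_coeff]
  refine Finset.sum_nonneg fun k _ => ?_
  rw [coeff_monomial]
  split_ifs
  · exact div_nonneg (hp k) (by positivity)
  · exact le_rfl

end Antiderivative

end Polynomial

theorem norm_le_of_norm_deriv_le_deriv_boundary_Ici {E : Type*} [NormedAddCommGroup E]
    [NormedSpace ℝ E] {f f' : ℝ → E} {B B' : ℝ → ℝ} {a : ℝ}
    (hf : ∀ x ∈ Ici a, HasDerivWithinAt f (f' x) (Ici a) x)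
    (hB : ∀ x ∈ Ici a, HasDerivAt B (B' x) x) (ha : ‖f a‖ ≤ B a)
    (bound : ∀ x ∈ Ici a, ‖f' x‖ ≤ B' x) : ∀ x ∈ Ici a, ‖f x‖ ≤ B x := fun _ hx =>
  image_norm_le_of_norm_deriv_right_le_deriv_boundary'
    (fun y hy => (hf y hy.1).continuousWithinAt.mono Icc_subset_Ici_self)
    (fun y hy => (hf y hy.1).mono (Ici_subset_Ici.mpr hy.1)) ha
    (fun y hy => (hB y hy.1).continuousAt.continuousWithinAt)
    (fun y hy => (hB y hy.1).hasDerivWithinAt) (fun y hy => bound y hy.1) ⟨hx, le_rfl⟩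

theorem hasDerivAt_rpow_mul_eval_log_div (Q : ℝ[X]) {r a x : ℝ} (ha : a ≠ 0) (hx : x ≠ 0) :
    HasDerivAt (fun y => y ^ r * Q.eval (Real.log (y / a)))
      (x ^ (r - 1) * (r * Q.eval (Real.log (x / a)) + (derivative Q).eval (Real.log (x / a))))
      x := by
  have hlog : HasDerivAt (fun y => Real.log (y / a)) x⁻¹ x := by
    convert ((hasDerivAt_id' x).div_const a).log (div_ne_zero hx ha) using 1
    field_simp
  refine ((Real.hasDerivAt_rpow_const (p := r) (Or.inl hx)).mul
    ((Q.hasDerivAt _).comp x hlog)).congr_deriv ?_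
  rw [Function.comp_apply, Real.rpow_sub_one hx]
  field_simp

theorem abs_le_rpow_mul_eval_log_div {r a : ℝ} (hr : 0 ≤ r) (ha : 0 < a) {Q : ℝ[X]}
    (hQ : ∀ y, 0 ≤ y → 0 ≤ Q.eval y) {f f' : ℝ → ℝ}
    (hf : ∀ x ∈ Ici a, HasDerivWithinAt f (f' x) (Ici a) x)
    (hf' : ∀ x, a ≤ x → |x * f' x| ≤ x ^ r * (derivative Q).eval (Real.log (x / a)))
    (hfa : |f a| ≤ a ^ r * Q.eval 0) :
    ∀ x, a ≤ x → |f x| ≤ x ^ r * Q.eval (Real.log (x / a)) := by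
  refine fun x hx => norm_le_of_norm_deriv_le_deriv_boundary_Ici hf
    (fun y hy => hasDerivAt_rpow_mul_eval_log_div Q ha.ne' (ha.trans_le hy).ne')
    (by simpa using hfa) (fun y hy => ?_) x hx
  have hy0 : 0 < y := ha.trans_le hy
  have hL : 0 ≤ Real.log (y / a) := Real.log_nonneg ((one_le_div ha).mpr hy)
  have hderiv : |f' y| ≤ y ^ (r - 1) * (derivative Q).eval (Real.log (y / a)) := by
    rw [Real.rpow_sub_one hy0.ne', div_mul_eq_mul_div, le_div_iff₀' hy0]
    simpa only [abs_mul, abs_of_pos hy0] using hf' y hy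
  calc ‖f' y‖ = |f' y| := Real.norm_eq_abs _
    _ ≤ y ^ (r - 1) * (derivative Q).eval (Real.log (y / a)) := hderiv
    _ ≤ _ := by
      gcongr
      exact le_add_of_nonneg_left (mul_nonneg hr (hQ _ hL))

/-- Relevant case of Definition/Lemma 1: a coupling with
`|x f'(x)| ≤ x^r P(log(x/Λ_R))` on `[Λ_R, ∞)` and finite initial condition
`|f(Λ_R)| ≤ c` satisfies `|f(Λ)| ≤ Λ^r Q(log(Λ/Λ_R))` for some polynomial `Q`
of degree `≤ q+1` with nonnegative coefficients depending only on
`P`, `q`, `r`, `c`, `Λ_R`. -/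
theorem relevant_coupling_estimate (r : ℝ) (hr : 0 < r) (q : ℕ)
    (ΛR : ℝ) (hΛR : 0 < ΛR) (c : ℝ) (hc : 0 ≤ c)
    (P : Polynomial ℝ) (hPdeg : P.natDegree ≤ q) (hPpos : ∀ k, 0 ≤ P.coeff k) :
    ∃ Q : Polynomial ℝ, Q.natDegree ≤ q + 1 ∧ (∀ k, 0 ≤ Q.coeff k) ∧
      ∀ f f' : ℝ → ℝ,
        (∀ x ∈ Set.Ici ΛR, HasDerivWithinAt f (f' x) (Set.Ici ΛR) x) →
        (∀ x, ΛR ≤ x → |x * f' x| ≤ x ^ r * P.eval (Real.log (x / ΛR))) →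
        |f ΛR| ≤ c →
        ∀ Λ, ΛR ≤ Λ → |f Λ| ≤ Λ ^ r * Q.eval (Real.log (Λ / ΛR)) := by
  set Q := C (c * ΛR ^ (-r)) + P.antiderivative
  have hQcoeff (k : ℕ) : 0 ≤ Q.coeff k := by
    rw [coeff_add, coeff_C]
    refine add_nonneg ?_ (coeff_antiderivative_nonneg hPpos k)
    split_ifs
    exacts [mul_nonneg hc (Real.rpow_nonneg hΛR.le _), le_rfl]
  have hQdeg : Q.natDegree ≤ q + 1 :=
    (natDegree_add_le _ _).trans <| max_le ((natDegree_C _).trans_le (Nat.zero_le _)) <|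
      (natDegree_antiderivative_le P).trans (Nat.succ_le_succ hPdeg)
  have hQ0 : ΛR ^ r * Q.eval 0 = c := by
    simp only [Q, eval_add, eval_C, eval_zero_antiderivative, add_zero]
    rw [mul_left_comm, ← Real.rpow_add hΛR, add_neg_cancel, Real.rpow_zero, mul_one]
  have hQderiv : derivative Q = P := by
    rw [derivative_add, derivative_C, zero_add, derivative_antiderivative]
  exact ⟨Q, hQdeg, hQcoeff, fun f f' hf hf' hfΛR => abs_le_rpow_mul_eval_log_div hr.le hΛR
    (fun y hy => eval_nonneg_of_coeff_nonneg hQcoeff hy) hf (hQderiv ▸ hf') (hQ0 ▸ hfΛR)⟩
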